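/- arXiv:1402.0060 — 3 statements merged into one kernel-verified Lean document; each statement's English description precedes it below -/
import Mathlib

section
/- For every prime power q ≥ 7, the minimum distance of the toric code C_{P_6^(2)} over 𝔽_q equals (q-1)² − 4(q-1), where P_6^(2) = conv{(0,0),(4,0),(0,1)}. -/
/-- Embed a lattice point of `ℤ²` into the real plane. -/
def toRealPt (p : ℤ × ℤ) : ℝ × ℝ := ((p.1 : ℝ), (p.2 : ℝ))

/-- The lattice points of the (possibly degenerate) convex lattice polygon spanned by a
finite set `V` of points of `ℤ²`, i.e. the points of `ℤ²` lying in the convex hull of `V`. -/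
def latticePts (V : Finset (ℤ × ℤ)) : Set (ℤ × ℤ) :=
  {p | toRealPt p ∈ convexHull ℝ (toRealPt '' (V : Set (ℤ × ℤ)))}

/-- The integer affine map `T(x) = Mx + v` on `ℤ²`. -/
def affMap (M : Matrix (Fin 2) (Fin 2) ℤ) (v : ℤ × ℤ) (p : ℤ × ℤ) : ℤ × ℤ :=
  (M 0 0 * p.1 + M 0 1 * p.2 + v.1, M 1 0 * p.1 + M 1 1 * p.2 + v.2)

/-- Two subsets of `ℤ²` are lattice equivalent if some affine map `T(x) = Mx + v`,
with `M ∈ GL(2,ℤ)` and `v ∈ ℤ²`, maps the first bijectively onto the second. -/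
def LatticeEquiv (S S' : Set (ℤ × ℤ)) : Prop :=
  ∃ (M : Matrix (Fin 2) (Fin 2) ℤ) (v : ℤ × ℤ),
    IsUnit M.det ∧ Set.BijOn (affMap M v) S S'

/-- Evaluation of the Laurent monomial `x^{m₁} y^{m₂}` at a point of the torus `(F*)²`. -/
def evalMonomial {F : Type*} [Field F] (m : ℤ × ℤ) (t : Fˣ × Fˣ) : F :=
  ((t.1 ^ m.1 : Fˣ) : F) * ((t.2 ^ m.2 : Fˣ) : F)

/-- The toric code over `F` associated to a set `S ⊆ ℤ²` of exponent vectors: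
the span of the evaluation vectors of the monomials `x^{m₁} y^{m₂}`, `m ∈ S`. -/
def toricCode (F : Type*) [Field F] (S : Set (ℤ × ℤ)) :
    Submodule F ((Fˣ × Fˣ) → F) :=
  Submodule.span F ((fun m => evalMonomial m) '' S)

/-- The Hamming weight of a word: the number of nonzero coordinates. -/
noncomputable def hammingWt {X F : Type*} [Zero F] (c : X → F) : ℕ :=
  Set.ncard {x | c x ≠ 0}

/-- The minimum distance of a linear code: the least Hamming weight of a nonzero codeword. -/
noncomputable def minDist {F X : Type*} [Field F] (C : Submodule F (X → F)) : ℕ :=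
  sInf {w | ∃ c ∈ C, c ≠ 0 ∧ hammingWt c = w}

/-- Monomial equivalence of linear codes inside `F^X`. -/
def MonomiallyEquiv {F X : Type*} [Field F] (C₁ C₂ : Submodule F (X → F)) : Prop :=
  ∃ (π : Equiv.Perm X) (d : X → Fˣ),
    (C₂ : Set (X → F)) = (fun c x => (d x : F) * c (π x)) '' (C₁ : Set (X → F))

/-- The vertex sets of the fourteen polygons `P₆⁽ⁱ⁾`, `i = 1, …, 14`. -/
def P6 : ℕ → Finset (ℤ × ℤ)
  | 1 => {(0,0),(5,0)}
  | 2 => {(0,0),(4,0),(0,1)}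
  | 3 => {(0,0),(3,0),(1,1),(0,1)}
  | 4 => {(0,-1),(3,0),(0,1)}
  | 5 => {(-1,-1),(3,0),(0,1)}
  | 6 => {(0,0),(1,0),(3,3),(0,1)}
  | 7 => {(0,0),(0,1),(3,0),(3,-1)}
  | 8 => {(-1,0),(0,1),(2,0),(0,-1)}
  | 9 => {(0,-1),(2,0),(1,1),(0,1)}
  | 10 => {(0,-1),(2,0),(-1,2)}
  | 11 => {(-1,-1),(1,0),(1,1),(0,2)}
  | 12 => {(-1,0),(0,-1),(1,0),(1,1),(0,1)}
  | 13 => {(0,0),(2,0),(0,2)}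
  | 14 => {(0,0),(2,0),(2,1),(0,1)}
  | _ => ∅

/-! A lattice point of `conv{(0,0), (n,0), (0,1)}` is `(k,0)` with `k ≤ n` or `(0,1)`, so a
codeword is `t ↦ f(t₁) + b t₂` with `deg f ≤ n`. If `b ≠ 0` it vanishes at most once on each
line `t₁ = const`, so at most `q - 1` times; if `b = 0` its zeros are the lines `t₁ = a` over the
at most `n` roots `a` of `f`. Hence a nonzero codeword has at most `n (q - 1)` zeros, and
`f = ∏_{a ∈ A} (X - a)` for a set `A` of `n` units attains this bound. -/

open Polynomial

section LatticePoints

-- `p.2 ≤ 1` only matters for `n = 0`, where the other three constraints cut out a ray.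
lemma convex_triangle_halfplanes (n : ℝ) :
    Convex ℝ {p : ℝ × ℝ | 0 ≤ p.1 ∧ 0 ≤ p.2 ∧ p.2 ≤ 1 ∧ p.1 + n * p.2 ≤ n} := by
  rintro ⟨x₁, y₁⟩ ⟨hx₁, hy₁, hy₁', h₁⟩ ⟨x₂, y₂⟩ ⟨hx₂, hy₂, hy₂', h₂⟩ a b ha hb hab
  refine ⟨?_, ?_, ?_, ?_⟩ <;> simp only [Prod.smul_mk, Prod.mk_add_mk, smul_eq_mul] at * <;>
    nlinarith [mul_le_mul_of_nonneg_left h₁ ha, mul_le_mul_of_nonneg_left h₂ hb,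
      (by rw [← add_mul, hab, one_mul] : a * n + b * n = n)]

lemma mk_zero_mem_segment {n k : ℕ} (hk : k ≤ n) :
    ((k : ℝ), (0 : ℝ)) ∈ segment ℝ ((0 : ℝ), (0 : ℝ)) ((n : ℝ), (0 : ℝ)) := by
  have hkn : (k : ℝ) / n * n = k := by
    rcases Nat.eq_zero_or_pos n with rfl | hn
    · simp [Nat.le_zero.1 hk]
    · field_simp
  refine ⟨1 - k / n, k / n, ?_, by positivity, by ring, ?_⟩
  · exact sub_nonneg.2 (div_le_one_of_le₀ (by exact_mod_cast hk) n.cast_nonneg)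
  · simp [hkn]

lemma latticePts_triangle (n : ℕ) :
    latticePts {(0, 0), ((n : ℤ), 0), (0, 1)} =
      insert (0, 1) ↑((Finset.range (n + 1)).image fun k : ℕ => ((k : ℤ), (0 : ℤ))) := by
  have hverts : toRealPt '' ↑({(0, 0), ((n : ℤ), 0), (0, 1)} : Finset (ℤ × ℤ)) =
      {((0 : ℝ), (0 : ℝ)), ((n : ℝ), 0), (0, 1)} := by
    simp [Set.image_insert_eq, toRealPt]
  ext ⟨a, b⟩
  simp only [latticePts, Set.mem_ofPred_eq, hverts, Finset.coe_image, Set.mem_insert_iff,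
    Set.mem_image, Finset.mem_coe, Finset.mem_range, Prod.mk.injEq]
  constructor
  · intro h
    have hK := convexHull_min ?_ (convex_triangle_halfplanes n) h
    · simp only [toRealPt, Set.mem_ofPred_eq] at hK
      obtain ⟨ha, hb, hb₁, hab⟩ := hK
      have ha : 0 ≤ a := by exact_mod_cast ha
      have hb : 0 ≤ b := by exact_mod_cast hb
      have hb₁ : b ≤ 1 := by exact_mod_cast hb₁
      have hab : a + n * b ≤ n := by exact_mod_cast hab
      obtain rfl | rfl : b = 0 ∨ b = 1 := by omega
      · lift a to ℕ using ha
        exact Or.inr ⟨a, by omega, rfl, rfl⟩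
      · exact Or.inl ⟨by omega, rfl⟩
    · rintro p (rfl | rfl | rfl) <;> simp
  · rintro (⟨rfl, rfl⟩ | ⟨k, hk, rfl, rfl⟩)
    · exact subset_convexHull ℝ _ (by simp [toRealPt])
    · refine segment_subset_convexHull (x := ((0 : ℝ), (0 : ℝ))) (y := ((n : ℝ), (0 : ℝ)))
        (by simp) (by simp) ?_
      simpa [toRealPt] using mk_zero_mem_segment (Nat.lt_succ_iff.1 hk)

end LatticePoints

section Codes

variable {F : Type*} [Field F]

lemma minDist_eq_of_forall_le {ι : Type*} {C : Submodule F (ι → F)} {w : ℕ}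
    (hle : ∀ c ∈ C, c ≠ 0 → w ≤ hammingWt c) (hex : ∃ c ∈ C, c ≠ 0 ∧ hammingWt c = w) :
    minDist C = w :=
  le_antisymm (Nat.sInf_le hex) <|
    le_csInf ⟨w, hex⟩ fun _ ⟨c, hc, hne, hw⟩ => hw ▸ hle c hc hne

lemma hammingWt_add_ncard_zeros {ι : Type*} [Finite ι] (c : ι → F) :
    hammingWt c + {x | c x = 0}.ncard = Nat.card ι := by
  rw [hammingWt, ← Set.ncard_add_ncard_compl {x | c x ≠ 0}, Set.compl_ofPred]
  simp only [not_not]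

noncomputable def evalFst : F[X] →ₗ[F] (Fˣ × Fˣ → F) :=
  LinearMap.pi fun t => Polynomial.leval (t.1 : F)

@[simp]
lemma evalFst_apply (P : F[X]) (t : Fˣ × Fˣ) : evalFst P t = P.eval (t.1 : F) := rfl

lemma toricCode_insert_range (n : ℕ) :
    toricCode F (insert (0, 1) ↑((Finset.range (n + 1)).image fun k : ℕ => ((k : ℤ), (0 : ℤ)))) =
      (degreeLE F n).map evalFst ⊔ F ∙ evalMonomial (0, 1) := by
  classical
  have hX : ∀ k : ℕ, evalFst (X ^ k : F[X]) = evalMonomial ((k : ℤ), 0) := fun k => by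
    ext t; simp [evalMonomial]
  rw [toricCode, Set.image_insert_eq, Submodule.span_insert, sup_comm, degreeLE_eq_span_X_pow,
    Submodule.map_span, Finset.coe_image, Finset.coe_image, Set.image_image, Set.image_image]
  simp only [hX]

lemma ncard_zeros_evalFst_prod (A : Finset Fˣ) :
    {t : Fˣ × Fˣ | evalFst (∏ a ∈ A, (X - C (a : F))) t = 0}.ncard = A.card * Nat.card Fˣ := by
  have hprod : {t : Fˣ × Fˣ | evalFst (∏ a ∈ A, (X - C (a : F))) t = 0} = ↑A ×ˢ Set.univ := by
    ext t; simp [eval_prod, Finset.prod_eq_zero_iff, sub_eq_zero, Units.val_inj]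
  rw [hprod, Set.ncard_prod, Set.ncard_coe_finset, Set.ncard_univ]

variable [Finite F]

lemma ncard_zeros_evalFst_le {P : F[X]} (hP : P ≠ 0) :
    {t : Fˣ × Fˣ | evalFst P t = 0}.ncard ≤ P.natDegree * Nat.card Fˣ := by
  have hprod : {t : Fˣ × Fˣ | evalFst P t = 0} = {u : Fˣ | P.eval (u : F) = 0} ×ˢ Set.univ := by
    ext; simp
  have hroots : {u : Fˣ | P.eval (u : F) = 0}.ncard ≤ P.natDegree :=
    (Set.ncard_le_ncard_of_injOn Units.val (fun _ hu => mem_rootSet.2 ⟨hP, by simpa using hu⟩)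
      Units.val_injective.injOn).trans (P.ncard_rootSet_le F)
  rw [hprod, Set.ncard_prod, Set.ncard_univ]
  exact Nat.mul_le_mul_right _ hroots

lemma ncard_zeros_add_smul_snd_le (P : F[X]) {b : F} (hb : b ≠ 0) :
    {t : Fˣ × Fˣ | (evalFst P + b • evalMonomial (0, 1) : Fˣ × Fˣ → F) t = 0}.ncard ≤
      Nat.card Fˣ := by
  rw [← Set.ncard_univ]
  refine Set.ncard_le_ncard_of_injOn Prod.fst (fun _ _ => Set.mem_univ _) ?_
  rintro ⟨u, v⟩ huv ⟨u', v'⟩ huv' (rfl : u = u')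
  simp only [Set.mem_ofPred_eq, Pi.add_apply, Pi.smul_apply, evalFst_apply, smul_eq_mul,
    evalMonomial, zpow_zero, zpow_one, Units.val_one, one_mul] at huv huv'
  have hv : (v : F) = v' := mul_left_cancel₀ hb (add_left_cancel (huv.trans huv'.symm))
  rw [Units.val_inj.1 hv]

lemma ncard_zeros_le_of_mem_sup {n : ℕ} (hn : 1 ≤ n) {c : Fˣ × Fˣ → F}
    (hc : c ∈ (degreeLE F n).map evalFst ⊔ F ∙ evalMonomial (0, 1)) (hc0 : c ≠ 0) :
    {t | c t = 0}.ncard ≤ n * Nat.card Fˣ := by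
  obtain ⟨_, ⟨P, hP, rfl⟩, _, hb, rfl⟩ := Submodule.mem_sup.1 hc
  obtain ⟨b, rfl⟩ := Submodule.mem_span_singleton.1 hb
  have hdeg : P.natDegree ≤ n := natDegree_le_iff_degree_le.2 (mem_degreeLE.1 hP)
  by_cases hb : b = 0
  · subst hb
    have hP0 : P ≠ 0 := by rintro rfl; simp at hc0
    calc _ = {t : Fˣ × Fˣ | evalFst P t = 0}.ncard := by simp
      _ ≤ P.natDegree * Nat.card Fˣ := ncard_zeros_evalFst_le hP0
      _ ≤ n * Nat.card Fˣ := Nat.mul_le_mul_right _ hdeg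
  · exact (ncard_zeros_add_smul_snd_le P hb).trans (Nat.le_mul_of_pos_left _ hn)

theorem minDist_toricCode_triangle {n : ℕ} (hn : 1 ≤ n) (hnq : n < Nat.card Fˣ) :
    minDist (toricCode F (latticePts {(0, 0), ((n : ℤ), 0), (0, 1)})) =
      Nat.card Fˣ * (Nat.card Fˣ - n) := by
  classical
  have : Fintype Fˣ := Fintype.ofFinite Fˣ
  rw [latticePts_triangle, toricCode_insert_range]
  have hwt (c : Fˣ × Fˣ → F) :
      hammingWt c = Nat.card Fˣ * Nat.card Fˣ - {t | c t = 0}.ncard := by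
    have := hammingWt_add_ncard_zeros c
    rw [Nat.card_prod] at this
    omega
  refine minDist_eq_of_forall_le (fun c hc hc0 => ?_) ?_
  · have := ncard_zeros_le_of_mem_sup hn hc hc0
    rw [hwt, Nat.mul_sub, mul_comm (Nat.card Fˣ) n]
    omega
  · obtain ⟨A, -, hA⟩ := Finset.exists_subset_card_eq (s := (Finset.univ : Finset Fˣ)) (n := n)
      (by rw [Finset.card_univ, ← Nat.card_eq_fintype_card]; exact hnq.le)
    set P : F[X] := ∏ a ∈ A, (X - C (a : F))
    have hw : hammingWt (evalFst P) = Nat.card Fˣ * (Nat.card Fˣ - n) := by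
      rw [hwt, ncard_zeros_evalFst_prod, hA, Nat.mul_sub, mul_comm n]
    refine ⟨evalFst P, Submodule.mem_sup_left (Submodule.mem_map_of_mem (mem_degreeLE.2 ?_)),
      fun h => ?_, hw⟩
    · rw [← hA, ← natDegree_finsetProd_X_sub_C_eq_card A (fun a => (a : F))]
      exact degree_le_natDegree
    · rw [h, show hammingWt (0 : Fˣ × Fˣ → F) = 0 by simp [hammingWt]] at hw
      exact (Nat.mul_pos (by omega) (by omega)).ne' hw.symm

end Codes

theorem minDist_P6_2_general (q : ℕ) (hq7 : 7 ≤ q)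
    (F : Type) [Field F] [Fintype F] (hF : Fintype.card F = q) :
    (minDist (toricCode F (latticePts (P6 2))) : ℤ)
      = ((q:ℤ) - 1)^2 - 4 * ((q:ℤ) - 1) := by
  classical
  have hunits : Nat.card Fˣ = q - 1 := by rw [Nat.card_eq_fintype_card, Fintype.card_units, hF]
  have hmin := minDist_toricCode_triangle (F := F) (n := 4) (by norm_num) (by omega)
  rw [show P6 2 = {(0, 0), (((4 : ℕ) : ℤ), 0), (0, 1)} from rfl, hmin, hunits]
  push_cast [Nat.cast_sub (by omega : 1 ≤ q), Nat.cast_sub (by omega : 4 ≤ q - 1)]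
  ring

/-- for every prime power `q ≥ 7`, the minimum distance of `C_{P₆⁽²⁾}`
over `𝔽_q` equals `(q-1)² − 4(q-1)`. -/
theorem minDist_P6_2 (q : ℕ) (hq : IsPrimePow q) (hq7 : 7 ≤ q)
    (F : Type) [Field F] [Fintype F] (hF : Fintype.card F = q) :
    (minDist (toricCode F (latticePts (P6 2))) : ℤ)
      = ((q:ℤ) - 1)^2 - 4 * ((q:ℤ) - 1) :=
  minDist_P6_2_general q hq7 F hF
end

section
/- For every prime power q ≥ 5, the minimum distance of the toric code C_{P_6^(3)} over 𝔽_q equals (q-1)² − 3(q-1), where P_6^(3) = conv{(0,0),(3,0),(1,1),(0,1)}. -/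
/-!
A codeword of `C_{P₆⁽³⁾}` is `f(x, y) = g(x) + y h(x)` with `deg g ≤ 3`, `deg h ≤ 1`; put
`n = q - 1` and count the nonzeros of `f` row by row, i.e. for each fixed `x ∈ 𝔽_q^*`.
If `h ≠ 0`, at least `n - 1` rows have `h(x) ≠ 0`, and each of them has at most one zero, so
the weight is at least `(n - 1)² ≥ (n - 3) n`. If `h = 0`, then `f` vanishes exactly on the
rows of the at most three roots of `g`, so the weight is at least `(n - 3) n`, with equality
for `g = (x - r₁)(x - r₂)(x - r₃)`, `rᵢ` distinct; this codeword is nonzero as `n ≥ 4`.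
-/

open Finset Polynomial

section Hamming

variable {α β M : Type*} [Fintype α] [Fintype β] [Zero M] [DecidableEq M]

lemma hammingWt_eq_hammingNorm (c : α → M) : hammingWt c = hammingNorm c := by
  rw [hammingWt, hammingNorm, Set.ncard_eq_toFinset_card']
  simp

lemma hammingNorm_prod (c : α × β → M) :
    hammingNorm c = ∑ x, hammingNorm fun y => c (x, y) := by
  simp only [hammingNorm, Finset.card_filter, ← Fintype.sum_prod_type']

lemma hammingNorm_comp_fst (f : α → M) :
    hammingNorm (fun t : α × β => f t.1) = hammingNorm f * Fintype.card β := by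
  rw [hammingNorm, hammingNorm, ← Finset.univ_product_univ,
    Finset.filter_product_left (fun x => f x ≠ 0), Finset.card_product, Finset.card_univ]

lemma hammingNorm_mul_le_of_le_hammingNorm_row {N : Type*} [Zero N] [DecidableEq N]
    (f : α → N) (c : α × β → M) (k : ℕ)
    (hrow : ∀ x, f x ≠ 0 → k ≤ hammingNorm fun y => c (x, y)) :
    hammingNorm f * k ≤ hammingNorm c := by
  rw [hammingNorm_prod, hammingNorm, ← smul_eq_mul]
  calc _ ≤ ∑ x ∈ {x | f x ≠ 0}, hammingNorm fun y => c (x, y) :=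
        Finset.card_nsmul_le_sum _ _ _ fun x hx => hrow x (Finset.mem_filter.1 hx).2
    _ ≤ _ := Finset.sum_le_sum_of_subset (Finset.subset_univ _)

end Hamming

def twoRowPts (a b : ℕ) : Set (ℤ × ℤ) :=
  {m | 0 ≤ m.1 ∧ (m.2 = 0 ∧ m.1 ≤ a ∨ m.2 = 1 ∧ m.1 ≤ b)}

lemma latticePts_P6_3 : latticePts (P6 3) = twoRowPts 3 1 := by
  set V := toRealPt '' (P6 3 : Set (ℤ × ℤ))
  set K : Set (ℝ × ℝ) := {p | 0 ≤ p.2 ∧ p.2 ≤ 1 ∧ 0 ≤ p.1 ∧ p.1 + 2 * p.2 ≤ 3}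
  have hK : Convex ℝ K := by
    rintro x ⟨hx1, hx2, hx3, hx4⟩ y ⟨hy1, hy2, hy3, hy4⟩ a b ha hb hab
    simp only [K, Set.mem_ofPred_eq, Prod.fst_add, Prod.snd_add, Prod.smul_fst, Prod.smul_snd,
      smul_eq_mul]
    refine ⟨by positivity, by nlinarith, by positivity, by nlinarith⟩
  have hV : V = {(0, 0), (3, 0), (1, 1), (0, 1)} := by
    simp [V, P6, toRealPt, Set.image_insert_eq]
  have hseg : ∀ {x y : ℝ × ℝ}, x ∈ V → y ∈ V → segment ℝ x y ⊆ convexHull ℝ V := fun hx hy =>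
    (convex_convexHull ℝ _).segment_subset (subset_convexHull ℝ _ hx) (subset_convexHull ℝ _ hy)
  ext ⟨m, k⟩
  simp only [latticePts, twoRowPts, Set.mem_ofPred_eq, toRealPt]
  constructor
  · intro h
    have hVK : V ⊆ K := by
      rw [hV]
      rintro p (rfl | rfl | rfl | rfl) <;> norm_num [K]
    obtain ⟨h1, h2, h3, h4⟩ : (0 : ℝ) ≤ k ∧ (k : ℝ) ≤ 1 ∧ (0 : ℝ) ≤ m ∧ (m : ℝ) + 2 * k ≤ 3 :=
      convexHull_min hVK hK h
    have : (0 : ℤ) ≤ k ∧ k ≤ 1 ∧ 0 ≤ m ∧ m + 2 * k ≤ 3 :=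
      ⟨by exact_mod_cast h1, by exact_mod_cast h2, by exact_mod_cast h3, by exact_mod_cast h4⟩
    omega
  · rintro ⟨hm, ⟨rfl, hm3⟩ | ⟨rfl, hm1⟩⟩
    · have : (0 : ℝ) ≤ m ∧ (m : ℝ) ≤ 3 := ⟨by exact_mod_cast hm, by exact_mod_cast hm3⟩
      refine hseg (x := (0, 0)) (y := (3, 0)) (by simp [hV]) (by simp [hV])
        ⟨1 - m / 3, m / 3, by linarith, by linarith, by ring, ?_⟩
      ext <;> simp
    · have : (0 : ℝ) ≤ m ∧ (m : ℝ) ≤ 1 := ⟨by exact_mod_cast hm, by exact_mod_cast hm1⟩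
      refine hseg (x := (0, 1)) (y := (1, 1)) (by simp [hV]) (by simp [hV])
        ⟨1 - m, m, by linarith, by linarith, by ring, ?_⟩
      ext <;> simp

section Torus

variable {F : Type*} [Field F]

variable (F) in
def torusEval : F[X] × F[X] →ₗ[F] (Fˣ × Fˣ → F) where
  toFun gh t := gh.1.eval (t.1 : F) + t.2 * gh.2.eval (t.1 : F)
  map_add' _ _ := by
    funext t
    simp only [Prod.fst_add, Prod.snd_add, eval_add, Pi.add_apply]
    ring
  map_smul' _ _ := by
    funext t
    simp only [Prod.smul_fst, Prod.smul_snd, eval_smul, smul_eq_mul, Pi.smul_apply,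
      RingHom.id_apply]
    ring

lemma torusEval_apply (g h : F[X]) (t : Fˣ × Fˣ) :
    torusEval F (g, h) t = g.eval (t.1 : F) + t.2 * h.eval (t.1 : F) := rfl

lemma torusEval_X_pow_zero (i : ℕ) : torusEval F (X ^ i, 0) = evalMonomial ((i : ℤ), 0) := by
  funext t
  simp [torusEval_apply, evalMonomial]

lemma torusEval_zero_X_pow (i : ℕ) : torusEval F (0, X ^ i) = evalMonomial ((i : ℤ), 1) := by
  funext t
  simp [torusEval_apply, evalMonomial, mul_comm]

lemma toricCode_twoRowPts (a b : ℕ) :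
    toricCode F (twoRowPts a b) = ((degreeLE F a).prod (degreeLE F b)).map (torusEval F) := by
  classical
  apply le_antisymm
  · rw [toricCode, Submodule.span_le]
    rintro _ ⟨⟨i, j⟩, ⟨hi, ⟨rfl, hia⟩ | ⟨rfl, hib⟩⟩, rfl⟩ <;> lift i to ℕ using hi
    · exact ⟨(X ^ i, 0), ⟨mem_degreeLE.2 (by simpa using hia), zero_mem _⟩,
        torusEval_X_pow_zero i⟩
    · exact ⟨(0, X ^ i), ⟨zero_mem _, mem_degreeLE.2 (by simpa using hib)⟩,
        torusEval_zero_X_pow i⟩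
  · have hinl : degreeLE F a ≤
        (toricCode F (twoRowPts a b)).comap (torusEval F ∘ₗ LinearMap.inl F F[X] F[X]) := by
      rw [degreeLE_eq_span_X_pow, Submodule.span_le]
      intro p hp
      obtain ⟨i, hi, rfl⟩ := by simpa using hp
      exact Submodule.subset_span
        ⟨((i : ℤ), 0), ⟨i.cast_nonneg, .inl ⟨rfl, Int.ofNat_le.2 hi⟩⟩,
          (torusEval_X_pow_zero i).symm⟩
    have hinr : degreeLE F b ≤
        (toricCode F (twoRowPts a b)).comap (torusEval F ∘ₗ LinearMap.inr F F[X] F[X]) := by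
      rw [degreeLE_eq_span_X_pow, Submodule.span_le]
      intro p hp
      obtain ⟨i, hi, rfl⟩ := by simpa using hp
      exact Submodule.subset_span
        ⟨((i : ℤ), 1), ⟨i.cast_nonneg, .inr ⟨rfl, Int.ofNat_le.2 hi⟩⟩,
          (torusEval_zero_X_pow i).symm⟩
    rw [Submodule.map_le_iff_le_comap]
    rintro ⟨g, h⟩ ⟨hg, hh⟩
    have hsplit : (g, h) = LinearMap.inl F F[X] F[X] g + LinearMap.inr F F[X] F[X] h := by simp
    rw [hsplit, Submodule.mem_comap, map_add]
    exact add_mem (hinl hg) (hinr hh)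

section Finite

variable [Fintype F] [DecidableEq F]

lemma card_units_sub_natDegree_le_hammingNorm_eval {p : F[X]} (hp : p ≠ 0) :
    Fintype.card Fˣ - p.natDegree ≤ hammingNorm fun x : Fˣ => p.eval (x : F) := by
  have hroots : #{x : Fˣ | p.eval (x : F) = 0} ≤ p.natDegree :=
    calc #{x : Fˣ | p.eval (x : F) = 0} ≤ #p.roots.toFinset :=
          Finset.card_le_card_of_injOn (↑) (fun x hx => by simpa [hp] using hx)
            Units.val_injective.injOn
      _ ≤ p.natDegree := (Multiset.toFinset_card_le _).trans (card_roots' p)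
  have hsplit := Finset.card_filter_add_card_filter_not (s := (univ : Finset Fˣ))
    (fun x => p.eval (x : F) = 0)
  rw [Finset.card_univ] at hsplit
  rw [hammingNorm]
  simp only [ne_eq]
  omega

lemma card_units_sub_one_le_hammingNorm_add_mul (a : F) {b : F} (hb : b ≠ 0) :
    Fintype.card Fˣ - 1 ≤ hammingNorm fun y : Fˣ => a + y * b := by
  have hp : C b * X + C a ≠ 0 := ne_zero_of_degree_gt (n := 0) (by rw [degree_linear hb]; simp)
  calc Fintype.card Fˣ - 1 ≤ Fintype.card Fˣ - (C b * X + C a).natDegree :=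
        Nat.sub_le_sub_left natDegree_linear_le _
    _ ≤ _ := card_units_sub_natDegree_le_hammingNorm_eval hp
    _ = _ := by simp only [eval_add, eval_mul, eval_C, eval_X, add_comm, mul_comm]

lemma hammingNorm_eval_prod_X_sub_C (s : Finset Fˣ) :
    (hammingNorm fun x : Fˣ => (∏ r ∈ s, (X - C (r : F))).eval (x : F))
      = Fintype.card Fˣ - #s := by
  rw [← Finset.card_compl, hammingNorm]
  congr 1
  ext x
  simp [eval_prod, Finset.prod_eq_zero_iff, sub_eq_zero, Units.val_inj]

lemma hammingNorm_torusEval_left (g : F[X]) :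
    hammingNorm (torusEval F (g, 0))
      = (hammingNorm fun x : Fˣ => g.eval (x : F)) * Fintype.card Fˣ := by
  rw [← hammingNorm_comp_fst]
  congr 1
  funext t
  simp only [torusEval_apply, eval_zero, mul_zero, add_zero]

lemma hammingNorm_mul_card_sub_one_le_hammingNorm_torusEval (g h : F[X]) :
    (hammingNorm fun x : Fˣ => h.eval (x : F)) * (Fintype.card Fˣ - 1)
      ≤ hammingNorm (torusEval F (g, h)) :=
  hammingNorm_mul_le_of_le_hammingNorm_row _ _ _ fun x hx =>
    card_units_sub_one_le_hammingNorm_add_mul (g.eval (x : F)) hx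

lemma sub_three_mul_le_hammingNorm_torusEval {g h : F[X]} (hg : g.natDegree ≤ 3)
    (hh : h.natDegree ≤ 1) (hgh : torusEval F (g, h) ≠ 0) :
    (Fintype.card Fˣ - 3) * Fintype.card Fˣ ≤ hammingNorm (torusEval F (g, h)) := by
  set n := Fintype.card Fˣ
  rcases eq_or_ne h 0 with rfl | hh0
  · have hg0 : g ≠ 0 := by rintro rfl; exact hgh (map_zero _)
    rw [hammingNorm_torusEval_left]
    exact Nat.mul_le_mul_right _
      ((Nat.sub_le_sub_left hg n).trans (card_units_sub_natDegree_le_hammingNorm_eval hg0))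
  · have hquad : (n - 3) * n ≤ (n - 1) * (n - 1) := by
      rcases le_or_gt n 3 with h3 | h3
      · simp [Nat.sub_eq_zero_of_le h3]
      · zify [h3.le, (by omega : 1 ≤ n)]; nlinarith
    calc (n - 3) * n ≤ (n - 1) * (n - 1) := hquad
      _ ≤ (hammingNorm fun x : Fˣ => h.eval (x : F)) * (n - 1) := Nat.mul_le_mul_right _
        ((Nat.sub_le_sub_left hh n).trans (card_units_sub_natDegree_le_hammingNorm_eval hh0))
      _ ≤ _ := hammingNorm_mul_card_sub_one_le_hammingNorm_torusEval g h

lemma minDist_toricCode_twoRowPts_three_one (hF : 4 ≤ Fintype.card Fˣ) :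
    minDist (toricCode F (twoRowPts 3 1))
      = (Fintype.card Fˣ - 3) * Fintype.card Fˣ := by
  obtain ⟨s, -, hs⟩ := Finset.exists_subset_card_eq (s := (univ : Finset Fˣ)) (n := 3)
    (by rw [Finset.card_univ]; omega)
  have hcubic : hammingNorm (torusEval F (∏ r ∈ s, (X - C (r : F)), 0))
      = (Fintype.card Fˣ - 3) * Fintype.card Fˣ := by
    rw [hammingNorm_torusEval_left, hammingNorm_eval_prod_X_sub_C, hs]
  rw [minDist, toricCode_twoRowPts]
  refine IsLeast.csInf_eq
    ⟨⟨_, ⟨(∏ r ∈ s, (X - C (r : F)), 0), ⟨?_, zero_mem _⟩, rfl⟩, ?_, ?_⟩, ?_⟩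
  · rw [SetLike.mem_coe, mem_degreeLE, ← natDegree_le_iff_degree_le,
      natDegree_finsetProd_X_sub_C_eq_card, hs]
  · rw [← hammingNorm_ne_zero_iff, hcubic]
    exact Nat.mul_ne_zero (by omega) (by omega)
  · rw [hammingWt_eq_hammingNorm, hcubic]
  · rintro _ ⟨_, ⟨⟨g, h⟩, ⟨hg, hh⟩, rfl⟩, hgh, rfl⟩
    rw [hammingWt_eq_hammingNorm]
    exact sub_three_mul_le_hammingNorm_torusEval
      (natDegree_le_iff_degree_le.2 (mem_degreeLE.1 hg))
      (natDegree_le_iff_degree_le.2 (mem_degreeLE.1 hh)) hgh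

end Finite

end Torus

theorem minDist_P6_3_general (q : ℕ) (hq5 : 5 ≤ q)
    (F : Type) [Field F] [Fintype F] (hF : Fintype.card F = q) :
    (minDist (toricCode F (latticePts (P6 3))) : ℤ)
      = ((q:ℤ) - 1)^2 - 3 * ((q:ℤ) - 1) := by
  classical
  have hn : Fintype.card Fˣ = q - 1 := by rw [Fintype.card_units, hF]
  rw [latticePts_P6_3, minDist_toricCode_twoRowPts_three_one (by omega), hn]
  push_cast [show 3 ≤ q - 1 by omega, show 1 ≤ q by omega]
  ring

/-- for every prime power `q ≥ 5`, the minimum distance of `C_{P₆⁽³⁾}`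
over `𝔽_q` equals `(q-1)² − 3(q-1)`. -/
theorem minDist_P6_3 (q : ℕ) (hq : IsPrimePow q) (hq5 : 5 ≤ q)
    (F : Type) [Field F] [Fintype F] (hF : Fintype.card F = q) :
    (minDist (toricCode F (latticePts (P6 3))) : ℤ)
      = ((q:ℤ) - 1)^2 - 3 * ((q:ℤ) - 1) :=
  minDist_P6_3_general q hq5 F hF
end

section
/- For every prime power q ≥ 9 and every index i with 4 ≤ i ≤ 8, the minimum distance of the toric code C_{P_6^(i)} over 𝔽_q equals (q-1)² − 3(q-1). -/
/-!
Each of the five polygons is, up to the unimodular shear `(m₁, m₂) ↦ (m₂, m₁ - m₂)` in the case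
of `P₆⁽⁶⁾`, contained in a strip set: four consecutive lattice points on the first axis and one
point on each of the lines `m₂ = ±1`, the four axis points belonging to the polygon. A codeword of
such a strip code is `t₁ᵏ A(t₁) + β t₁ᵃ t₂ + γ t₁ᵇ t₂⁻¹` with `deg A ≤ 3`. If `β = γ = 0`, its
zeros are the `q - 1` points on each of the at most three lines `t₁ = u` with `A(u) = 0`;
otherwise, on every line `t₁ = u` it is `t₂⁻¹` times a nonzero quadratic in `t₂`, with at most
two zeros. So a nonzero codeword has at most `3(q - 1)` zeros, and `t₁ᵏ (t₁ - a)(t₁ - b)(t₁ - c)`,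
for distinct units `a, b, c`, has exactly that many.
-/

open Polynomial Finset

section HammingWeight

variable {X Y F : Type*}

lemma hammingWt_add_card_zeros [Fintype X] [Zero F] [DecidableEq F] (c : X → F) :
    hammingWt c + #{x | c x = 0} = Fintype.card X := by
  rw [hammingWt, Set.ncard_eq_toFinset_card', Set.toFinset_ofPred, add_comm,
    card_filter_add_card_filter_not, card_univ]

lemma hammingWt_comp_equiv [Zero F] (e : X ≃ Y) (c : Y → F) :
    hammingWt (c ∘ e) = hammingWt c := by
  rw [hammingWt, hammingWt, ← Set.ncard_image_of_injective _ e.injective]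
  congr 1
  ext y
  simp

lemma minDist_map_funLeft [Field F] (e : X ≃ Y) (C : Submodule F (Y → F)) :
    minDist (C.map (LinearMap.funLeft F F e)) = minDist C := by
  have hinj := LinearMap.funLeft_injective_of_surjective F F e e.surjective
  unfold minDist
  congr 1
  ext w
  constructor
  · rintro ⟨_, ⟨c, hc, rfl⟩, hne, rfl⟩
    exact ⟨c, hc, fun h => hne (by rw [h, map_zero]), (hammingWt_comp_equiv e c).symm⟩
  · rintro ⟨c, hc, hne, rfl⟩
    exact ⟨c ∘ e, ⟨c, hc, rfl⟩, fun h => hne (hinj (h.trans (map_zero _).symm)),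
      hammingWt_comp_equiv e c⟩

end HammingWeight

section Counting

variable {α β : Type*} [Fintype α] [Fintype β]

lemma card_filter_fst (p : α → Prop) [DecidablePred p] :
    #{x : α × β | p x.1} = #{a | p a} * Fintype.card β := by
  rw [← univ_product_univ, filter_product_left, card_product, card_univ]

lemma card_filter_le_of_forall_card_fiber_le (r : α → β → Prop) [∀ a, DecidablePred (r a)]
    {n : ℕ} (h : ∀ a, #{b | r a b} ≤ n) :
    #{x : α × β | r x.1 x.2} ≤ n * Fintype.card α := by
  rw [card_filter, Fintype.sum_prod_type]
  simp_rw [← card_filter]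
  calc ∑ a, #{b | r a b} ≤ ∑ _a : α, n := sum_le_sum fun a _ => h a
    _ = n * Fintype.card α := by rw [sum_const, card_univ, smul_eq_mul, mul_comm]

end Counting

section Roots

variable {F : Type*} [Field F] [Fintype F] [DecidableEq F]

lemma card_units_roots_le {P : F[X]} (hP : P ≠ 0) :
    #{u : Fˣ | P.eval (u : F) = 0} ≤ P.natDegree := by
  rw [← card_map ⟨_, Units.val_injective⟩]
  refine card_le_degree_of_subset_roots fun x hx => ?_
  obtain ⟨u, hu, rfl⟩ := mem_map.mp hx
  exact (mem_roots hP).mpr (mem_filter.mp hu).2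

lemma card_units_roots_prod_X_sub_C (T : Finset Fˣ) :
    #{u : Fˣ | (∏ x ∈ T, (X - C (x : F))).eval (u : F) = 0} = #T := by
  congr 1
  ext u
  simp [eval_prod, prod_eq_zero_iff, sub_eq_zero, Units.val_inj]

end Roots

section ToricCode

variable {F : Type*} [Field F]

lemma evalMonomial_apply (m : ℤ × ℤ) (t : Fˣ × Fˣ) :
    evalMonomial m t = (t.1 : F) ^ m.1 * (t.2 : F) ^ m.2 := by
  simp [evalMonomial, Units.val_zpow_eq_zpow_val]

lemma toricCode_image (e : Fˣ × Fˣ ≃ Fˣ × Fˣ) (A : ℤ × ℤ → ℤ × ℤ)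
    (hA : ∀ m, evalMonomial m ∘ e = evalMonomial (F := F) (A m)) (S : Set (ℤ × ℤ)) :
    toricCode F (A '' S) = (toricCode F S).map (LinearMap.funLeft F F e) := by
  rw [toricCode, toricCode, Submodule.map_span, Set.image_image, Set.image_image]
  congr 1
  exact Set.image_congr fun m _ => (hA m).symm

lemma minDist_toricCode_image (e : Fˣ × Fˣ ≃ Fˣ × Fˣ) (A : ℤ × ℤ → ℤ × ℤ)
    (hA : ∀ m, evalMonomial m ∘ e = evalMonomial (F := F) (A m)) (S : Set (ℤ × ℤ)) :
    minDist (toricCode F (A '' S)) = minDist (toricCode F S) := by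
  rw [toricCode_image e A hA, minDist_map_funLeft]

lemma row_mem_toricCode {S : Set (ℤ × ℤ)} {k : ℤ} {n : ℕ}
    (hS : ∀ i : ℕ, i < n → (k + i, (0 : ℤ)) ∈ S) {A : F[X]} (hA : A.natDegree < n) :
    (fun t : Fˣ × Fˣ => (t.1 : F) ^ k * A.eval (t.1 : F)) ∈ toricCode F S := by
  have hsum : (fun t : Fˣ × Fˣ => (t.1 : F) ^ k * A.eval (t.1 : F))
      = ∑ i ∈ range n, A.coeff i • evalMonomial (k + i, 0) := by
    ext t
    simp only [eval_eq_sum_range' hA, mul_sum, Finset.sum_apply, Pi.smul_apply, smul_eq_mul,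
      evalMonomial_apply, zpow_add₀ (Units.ne_zero t.1), zpow_natCast, zpow_zero, mul_one]
    exact sum_congr rfl fun i _ => by ring
  rw [hsum]
  exact Submodule.sum_mem _ fun i hi =>
    Submodule.smul_mem _ _ (Submodule.subset_span ⟨_, hS i (mem_range.mp hi), rfl⟩)

end ToricCode

def stripSet (k a b : ℤ) : Set (ℤ × ℤ) :=
  {(k, 0), (k + 1, 0), (k + 2, 0), (k + 3, 0), (a, 1), (b, -1)}

section Strip

variable {F : Type*} [Field F] {k a b : ℤ}

lemma exists_eq_of_mem_toricCode_stripSet {c : Fˣ × Fˣ → F}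
    (hc : c ∈ toricCode F (stripSet k a b)) :
    ∃ A : F[X], A.natDegree ≤ 3 ∧ ∃ β γ : F, ∀ t : Fˣ × Fˣ,
      c t = (t.1 : F) ^ k * A.eval (t.1 : F) + β * (t.1 : F) ^ a * t.2
        + γ * (t.1 : F) ^ b * (t.2 : F)⁻¹ := by
  induction hc using Submodule.span_induction with
  | mem x hx =>
    obtain ⟨m, hm, rfl⟩ := hx
    simp only [stripSet, Set.mem_insert_iff, Set.mem_singleton_iff] at hm
    rcases hm with rfl | rfl | rfl | rfl | rfl | rfl
    · exact ⟨1, by simp, 0, 0, fun t => by simp [evalMonomial_apply]⟩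
    · refine ⟨X, natDegree_X_le.trans (by norm_num), 0, 0, fun t => ?_⟩
      simp [evalMonomial_apply, zpow_add₀ (Units.ne_zero t.1)]
    · refine ⟨X ^ 2, natDegree_X_pow_le 2 |>.trans (by norm_num), 0, 0, fun t => ?_⟩
      simp [evalMonomial_apply, zpow_add₀ (Units.ne_zero t.1)]
    · refine ⟨X ^ 3, natDegree_X_pow_le 3, 0, 0, fun t => ?_⟩
      simp [evalMonomial_apply, zpow_add₀ (Units.ne_zero t.1)]
    · exact ⟨0, by simp, 1, 0, fun t => by simp [evalMonomial_apply]⟩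
    · exact ⟨0, by simp, 0, 1, fun t => by simp [evalMonomial_apply]⟩
  | zero => exact ⟨0, by simp, 0, 0, fun t => by simp⟩
  | add c₁ c₂ _ _ h₁ h₂ =>
    obtain ⟨A₁, hA₁, β₁, γ₁, h₁⟩ := h₁
    obtain ⟨A₂, hA₂, β₂, γ₂, h₂⟩ := h₂
    exact ⟨A₁ + A₂, natDegree_add_le_of_degree_le hA₁ hA₂, β₁ + β₂, γ₁ + γ₂,
      fun t => by simp only [Pi.add_apply, h₁, h₂, eval_add]; ring⟩
  | smul r c _ h =>
    obtain ⟨A, hA, β, γ, h⟩ := h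
    exact ⟨r • A, (natDegree_smul_le r A).trans hA, r * β, r * γ,
      fun t => by simp only [Pi.smul_apply, smul_eq_mul, h, eval_smul]; ring⟩

variable [Fintype F] [DecidableEq F]

lemma card_zeros_row (A : F[X]) :
    #{t : Fˣ × Fˣ | (t.1 : F) ^ k * A.eval (t.1 : F) = 0}
      = #{u : Fˣ | A.eval (u : F) = 0} * Fintype.card Fˣ := by
  have hzero : ∀ u : Fˣ, (u : F) ^ k * A.eval (u : F) = 0 ↔ A.eval (u : F) = 0 := fun u => by
    simp [zpow_ne_zero k (Units.ne_zero u)]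
  simp_rw [hzero]
  exact card_filter_fst (fun u : Fˣ => A.eval (u : F) = 0)

lemma card_zeros_le_of_mem_toricCode_stripSet {c : Fˣ × Fˣ → F}
    (hc : c ∈ toricCode F (stripSet k a b)) (hc0 : c ≠ 0) :
    #{t | c t = 0} ≤ 3 * Fintype.card Fˣ := by
  obtain ⟨A, hA, β, γ, hct⟩ := exists_eq_of_mem_toricCode_stripSet hc
  by_cases hβγ : β = 0 ∧ γ = 0
  · obtain ⟨rfl, rfl⟩ := hβγ
    have hA0 : A ≠ 0 := by
      rintro rfl
      exact hc0 (funext fun t => by simp [hct])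
    calc #{t | c t = 0} = #{u : Fˣ | A.eval (u : F) = 0} * Fintype.card Fˣ := by
          simp only [hct, zero_mul, add_zero]; exact card_zeros_row A
      _ ≤ 3 * Fintype.card Fˣ := Nat.mul_le_mul_right _ ((card_units_roots_le hA0).trans hA)
  · let Q : Fˣ → F[X] := fun u =>
      C (β * (u : F) ^ a) * X ^ 2 + C ((u : F) ^ k * A.eval (u : F)) * X + C (γ * (u : F) ^ b)
    have hQ : ∀ t : Fˣ × Fˣ, (Q t.1).eval (t.2 : F) = t.2 * c t := fun t => by
      simp only [Q, hct, eval_add, eval_mul, eval_C, eval_X, eval_pow]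
      field_simp
      ring
    have hQ0 : ∀ u, Q u ≠ 0 := fun u hu => hβγ <| by
      have h2 := congrArg (coeff · 2) hu
      have h0 := congrArg (coeff · 0) hu
      simp only [Q, coeff_add, coeff_C_mul, coeff_X_pow, coeff_X, coeff_C, coeff_zero] at h2 h0
      simp [zpow_ne_zero _ (Units.ne_zero u)] at h2 h0
      exact ⟨h2, h0⟩
    calc #{t | c t = 0} = #{t : Fˣ × Fˣ | (Q t.1).eval (t.2 : F) = 0} := by
          simp_rw [hQ, mul_eq_zero, Units.ne_zero, false_or]
      _ ≤ 2 * Fintype.card Fˣ := card_filter_le_of_forall_card_fiber_le _ fun u =>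
          (card_units_roots_le (hQ0 u)).trans natDegree_quadratic_le
      _ ≤ 3 * Fintype.card Fˣ := Nat.mul_le_mul_right _ (by norm_num)

lemma exists_mem_toricCode_card_zeros_eq {S : Set (ℤ × ℤ)}
    (hS : ∀ i : ℕ, i < 4 → (k + i, (0 : ℤ)) ∈ S) (hN : 4 ≤ Fintype.card Fˣ) :
    ∃ c ∈ toricCode F S, c ≠ 0 ∧ #{t | c t = 0} = 3 * Fintype.card Fˣ := by
  obtain ⟨T, -, hT⟩ := exists_subset_card_eq (s := (univ : Finset Fˣ)) (n := 3)
    (by rw [card_univ]; omega)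
  let A : F[X] := ∏ x ∈ T, (X - C (x : F))
  have hzeros : #{t : Fˣ × Fˣ | (t.1 : F) ^ k * A.eval (t.1 : F) = 0}
      = 3 * Fintype.card Fˣ := by
    rw [card_zeros_row, card_units_roots_prod_X_sub_C, hT]
  refine ⟨_, row_mem_toricCode hS (A := A) (by simp [A, hT]), fun h => ?_, hzeros⟩
  simp only [congrFun h, Pi.zero_apply, eq_self, filter_true, card_univ,
    Fintype.card_prod] at hzeros
  nlinarith

theorem minDist_toricCode_of_subset_stripSet {S : Set (ℤ × ℤ)} (hS : S ⊆ stripSet k a b)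
    (hrow : ∀ i : ℕ, i < 4 → (k + i, (0 : ℤ)) ∈ S) (hN : 4 ≤ Fintype.card Fˣ) :
    minDist (toricCode F S) = Fintype.card Fˣ * Fintype.card Fˣ - 3 * Fintype.card Fˣ := by
  have hwt (c : Fˣ × Fˣ → F) :
      hammingWt c = Fintype.card Fˣ * Fintype.card Fˣ - #{t | c t = 0} := by
    have := hammingWt_add_card_zeros c
    rw [Fintype.card_prod] at this
    omega
  refine IsLeast.csInf_eq ⟨?_, ?_⟩
  · obtain ⟨c, hc, hc0, hzeros⟩ := exists_mem_toricCode_card_zeros_eq hrow hN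
    exact ⟨c, hc, hc0, by rw [hwt, hzeros]⟩
  · rintro _ ⟨c, hc, hc0, rfl⟩
    rw [hwt]
    exact Nat.sub_le_sub_left (card_zeros_le_of_mem_toricCode_stripSet
      (Submodule.span_mono (Set.image_mono hS) hc) hc0) _

end Strip

section LatticePoints

variable {V : Finset (ℤ × ℤ)}

lemma mem_latticePts_of_mem {p : ℤ × ℤ} (hp : p ∈ V) : p ∈ latticePts V :=
  subset_convexHull ℝ _ ⟨p, hp, rfl⟩

lemma mem_latticePts_of_nsmul_eq {p : ℤ × ℤ} (u v w : ℤ × ℤ) (huvw : {u, v, w} ⊆ V)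
    (i j l : ℕ) (hn : i + j + l ≠ 0) (h : (i + j + l) • p = i • u + j • v + l • w) :
    p ∈ latticePts V := by
  simp only [insert_subset_iff, singleton_subset_iff] at huvw
  obtain ⟨hu, hv, hw⟩ := huvw
  have hn' : (i + j + l : ℝ) ≠ 0 := by exact_mod_cast hn
  have h1 : (i + j + l : ℝ) * p.1 = i * u.1 + j * v.1 + l * w.1 := by
    have := congrArg Prod.fst h; push_cast [Prod.smul_fst, nsmul_eq_mul] at this
    exact_mod_cast this
  have h2 : (i + j + l : ℝ) * p.2 = i * u.2 + j * v.2 + l * w.2 := by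
    have := congrArg Prod.snd h; push_cast [Prod.smul_snd, nsmul_eq_mul] at this
    exact_mod_cast this
  have hmem := (convex_convexHull ℝ (toRealPt '' (V : Set (ℤ × ℤ)))).sum_mem
    (t := univ) (w := fun x : Fin 3 => ![(i : ℝ), j, l] x / (i + j + l))
    (z := ![toRealPt u, toRealPt v, toRealPt w])
    (fun x _ => by fin_cases x <;> simp <;> positivity)
    (by simp [Fin.sum_univ_three]; field_simp)
    (fun x _ => by fin_cases x <;> exact subset_convexHull ℝ _ ⟨_, by assumption, rfl⟩)
  refine (Set.mem_of_eq_of_mem ?_ hmem : toRealPt p ∈ _)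
  simp [Fin.sum_univ_three, toRealPt, Prod.ext_iff]
  constructor <;> field_simp <;> linarith

lemma le_of_mem_latticePts {a b r : ℤ} (hV : ∀ v ∈ V, a * v.1 + b * v.2 ≤ r) {p : ℤ × ℤ}
    (hp : p ∈ latticePts V) : a * p.1 + b * p.2 ≤ r := by
  let H : Set (ℝ × ℝ) := {x | a * x.1 + b * x.2 ≤ r}
  have hH : Convex ℝ H := convex_halfSpace_le
    ⟨fun x y => by simp only [Prod.fst_add, Prod.snd_add]; ring,
      fun c x => by simp only [Prod.smul_fst, Prod.smul_snd, smul_eq_mul]; ring⟩ _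
  have hsub : toRealPt '' (V : Set (ℤ × ℤ)) ⊆ H := by
    rintro _ ⟨v, hv, rfl⟩
    simp only [H, toRealPt, Set.mem_ofPred_eq]
    exact_mod_cast hV v hv
  have := convexHull_min hsub hH hp
  simp only [H, toRealPt, Set.mem_ofPred_eq] at this
  exact_mod_cast this

end LatticePoints

section Polygons

variable {F : Type*} [Field F] [Fintype F] [DecidableEq F]

lemma minDist_P6_4 (hN : 4 ≤ Fintype.card Fˣ) :
    minDist (toricCode F (latticePts (P6 4)))
      = Fintype.card Fˣ * Fintype.card Fˣ - 3 * Fintype.card Fˣ := by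
  refine minDist_toricCode_of_subset_stripSet (k := 0) (a := 0) (b := 0) (fun p hp => ?_) ?_ hN
  · have h₁ := le_of_mem_latticePts (a := -1) (b := 0) (r := 0) (by decide) hp
    have h₂ := le_of_mem_latticePts (a := 1) (b := -3) (r := 3) (by decide) hp
    have h₃ := le_of_mem_latticePts (a := 1) (b := 3) (r := 3) (by decide) hp
    simp only [stripSet, Set.mem_insert_iff, Set.mem_singleton_iff, Prod.ext_iff]
    omega
  · intro i hi
    interval_cases i
    · exact mem_latticePts_of_nsmul_eq (0, -1) (3, 0) (0, 1) (by decide) 1 0 1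
        (by decide) (by decide)
    · exact mem_latticePts_of_nsmul_eq (0, -1) (3, 0) (0, 1) (by decide) 1 1 1
        (by decide) (by decide)
    · exact mem_latticePts_of_nsmul_eq (0, -1) (3, 0) (0, 1) (by decide) 1 4 1
        (by decide) (by decide)
    · exact mem_latticePts_of_mem (by decide)

lemma minDist_P6_5 (hN : 4 ≤ Fintype.card Fˣ) :
    minDist (toricCode F (latticePts (P6 5)))
      = Fintype.card Fˣ * Fintype.card Fˣ - 3 * Fintype.card Fˣ := by
  refine minDist_toricCode_of_subset_stripSet (k := 0) (a := 0) (b := -1) (fun p hp => ?_) ?_ hN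
  · have h₁ := le_of_mem_latticePts (a := 1) (b := -4) (r := 3) (by decide) hp
    have h₂ := le_of_mem_latticePts (a := 1) (b := 3) (r := 3) (by decide) hp
    have h₃ := le_of_mem_latticePts (a := -2) (b := 1) (r := 1) (by decide) hp
    simp only [stripSet, Set.mem_insert_iff, Set.mem_singleton_iff, Prod.ext_iff]
    omega
  · intro i hi
    interval_cases i
    · exact mem_latticePts_of_nsmul_eq (-1, -1) (3, 0) (0, 1) (by decide) 3 1 3
        (by decide) (by decide)
    · exact mem_latticePts_of_nsmul_eq (-1, -1) (3, 0) (0, 1) (by decide) 2 3 2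
        (by decide) (by decide)
    · exact mem_latticePts_of_nsmul_eq (-1, -1) (3, 0) (0, 1) (by decide) 1 5 1
        (by decide) (by decide)
    · exact mem_latticePts_of_mem (by decide)

def torusShear (F : Type*) [Field F] : Fˣ × Fˣ ≃ Fˣ × Fˣ where
  toFun t := (t.2, t.1 * t.2⁻¹)
  invFun t := (t.1 * t.2, t.1)
  left_inv t := by simp
  right_inv t := by simp

omit [Fintype F] [DecidableEq F] in
lemma evalMonomial_comp_torusShear (m : ℤ × ℤ) :
    evalMonomial m ∘ torusShear F = evalMonomial (m.2, m.1 - m.2) := by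
  ext t
  simp only [Function.comp_apply, torusShear, Equiv.coe_fn_mk, evalMonomial_apply,
    Units.val_mul, Units.val_inv_eq_inv_val, mul_zpow, inv_zpow, zpow_sub₀ (Units.ne_zero t.2)]
  ring

lemma minDist_P6_6 (hN : 4 ≤ Fintype.card Fˣ) :
    minDist (toricCode F (latticePts (P6 6)))
      = Fintype.card Fˣ * Fintype.card Fˣ - 3 * Fintype.card Fˣ := by
  rw [← minDist_toricCode_image (torusShear F) _ evalMonomial_comp_torusShear]
  refine minDist_toricCode_of_subset_stripSet (k := 0) (a := 0) (b := 1) ?_ (fun i hi => ?_) hN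
  · rintro _ ⟨p, hp, rfl⟩
    have h₁ := le_of_mem_latticePts (a := -1) (b := 0) (r := 0) (by decide) hp
    have h₂ := le_of_mem_latticePts (a := 0) (b := -1) (r := 0) (by decide) hp
    have h₃ := le_of_mem_latticePts (a := 3) (b := -2) (r := 3) (by decide) hp
    have h₄ := le_of_mem_latticePts (a := -2) (b := 3) (r := 3) (by decide) hp
    simp only [stripSet, Set.mem_insert_iff, Set.mem_singleton_iff, Prod.ext_iff]
    omega
  · refine ⟨(i, i), ?_, by simp⟩
    interval_cases i
    · exact mem_latticePts_of_mem (by decide)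
    · exact mem_latticePts_of_nsmul_eq (0, 0) (3, 3) (0, 1) (by decide) 2 1 0
        (by decide) (by decide)
    · exact mem_latticePts_of_nsmul_eq (0, 0) (3, 3) (0, 1) (by decide) 1 2 0
        (by decide) (by decide)
    · exact mem_latticePts_of_mem (by decide)

lemma minDist_P6_7 (hN : 4 ≤ Fintype.card Fˣ) :
    minDist (toricCode F (latticePts (P6 7)))
      = Fintype.card Fˣ * Fintype.card Fˣ - 3 * Fintype.card Fˣ := by
  refine minDist_toricCode_of_subset_stripSet (k := 0) (a := 0) (b := 3) (fun p hp => ?_) ?_ hN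
  · have h₁ := le_of_mem_latticePts (a := -1) (b := 0) (r := 0) (by decide) hp
    have h₂ := le_of_mem_latticePts (a := 1) (b := 0) (r := 3) (by decide) hp
    have h₃ := le_of_mem_latticePts (a := 1) (b := 3) (r := 3) (by decide) hp
    have h₄ := le_of_mem_latticePts (a := -1) (b := -3) (r := 0) (by decide) hp
    simp only [stripSet, Set.mem_insert_iff, Set.mem_singleton_iff, Prod.ext_iff]
    omega
  · intro i hi
    interval_cases i
    · exact mem_latticePts_of_mem (by decide)
    · exact mem_latticePts_of_nsmul_eq (0, 0) (3, 0) (0, 1) (by decide) 2 1 0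
        (by decide) (by decide)
    · exact mem_latticePts_of_nsmul_eq (0, 0) (3, 0) (0, 1) (by decide) 1 2 0
        (by decide) (by decide)
    · exact mem_latticePts_of_mem (by decide)

lemma minDist_P6_8 (hN : 4 ≤ Fintype.card Fˣ) :
    minDist (toricCode F (latticePts (P6 8)))
      = Fintype.card Fˣ * Fintype.card Fˣ - 3 * Fintype.card Fˣ := by
  refine minDist_toricCode_of_subset_stripSet (k := -1) (a := 0) (b := 0) (fun p hp => ?_) ?_ hN
  · have h₁ := le_of_mem_latticePts (a := -1) (b := 1) (r := 1) (by decide) hp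
    have h₂ := le_of_mem_latticePts (a := 1) (b := 2) (r := 2) (by decide) hp
    have h₃ := le_of_mem_latticePts (a := 1) (b := -2) (r := 2) (by decide) hp
    have h₄ := le_of_mem_latticePts (a := -1) (b := -1) (r := 1) (by decide) hp
    simp only [stripSet, Set.mem_insert_iff, Set.mem_singleton_iff, Prod.ext_iff]
    omega
  · intro i hi
    interval_cases i
    · exact mem_latticePts_of_mem (by decide)
    · exact mem_latticePts_of_nsmul_eq (0, 1) (0, -1) (2, 0) (by decide) 1 1 0
        (by decide) (by decide)
    · exact mem_latticePts_of_nsmul_eq (-1, 0) (2, 0) (0, 1) (by decide) 1 2 0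
        (by decide) (by decide)
    · exact mem_latticePts_of_mem (by decide)

end Polygons

theorem minDist_P6_4_to_8_general (q : ℕ) (hq9 : 9 ≤ q)
    (F : Type) [Field F] [Fintype F] (hF : Fintype.card F = q)
    (i : ℕ) (h4 : 4 ≤ i) (h8 : i ≤ 8) :
    (minDist (toricCode F (latticePts (P6 i))) : ℤ)
      = ((q:ℤ) - 1)^2 - 3 * ((q:ℤ) - 1) := by
  classical
  have hN : Fintype.card Fˣ = q - 1 := by rw [Fintype.card_units, hF]
  have hN4 : 4 ≤ Fintype.card Fˣ := by omega
  have hmin : minDist (toricCode F (latticePts (P6 i)))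
      = Fintype.card Fˣ * Fintype.card Fˣ - 3 * Fintype.card Fˣ := by
    interval_cases i
    exacts [minDist_P6_4 hN4, minDist_P6_5 hN4, minDist_P6_6 hN4, minDist_P6_7 hN4,
      minDist_P6_8 hN4]
  rw [hmin, Nat.cast_sub (Nat.mul_le_mul_right _ (by omega)), hN]
  push_cast [Nat.cast_sub (by omega : 1 ≤ q)]
  ring

/-- for every prime power `q ≥ 9` and `4 ≤ i ≤ 8`, the minimum distance of
`C_{P₆⁽ⁱ⁾}` over `𝔽_q` equals `(q-1)² − 3(q-1)`. -/
theorem minDist_P6_4_to_8 (q : ℕ) (hq : IsPrimePow q) (hq9 : 9 ≤ q)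
    (F : Type) [Field F] [Fintype F] (hF : Fintype.card F = q)
    (i : ℕ) (h4 : 4 ≤ i) (h8 : i ≤ 8) :
    (minDist (toricCode F (latticePts (P6 i))) : ℤ)
      = ((q:ℤ) - 1)^2 - 3 * ((q:ℤ) - 1) :=
  minDist_P6_4_to_8_general q hq9 F hF i h4 h8
end
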